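/- arXiv:1905.04162 — 7 statements merged into one kernel-verified Lean document; each statement's English description precedes it below -/
import Mathlib

section
/- In the SSFS model with Hamming bonus, there exists a 2-competitive deterministic online algorithm; that is, for all n, T ∈ ℕ with T ≥ 1 there is a deterministic online algorithm whose output sequence on every SSFS instance has value at least OPT/2. -/
/-- The value of a solution sequence under the Hamming bonus: total profit plus,
for each pair of consecutive steps, `n` minus the Hamming distance
(cardinality of the symmetric difference) of the two solutions. -/
noncomputable def hamVal (n T : ℕ) (p : ℕ → Finset (Fin n) → ℝ)
    (S : ℕ → Finset (Fin n)) : ℝ :=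
  (∑ t ∈ Finset.range T, p t (S t)) +
    ∑ t ∈ Finset.range (T - 1),
      ((n : ℝ) - (((S t \ S (t + 1)) ∪ (S (t + 1) \ S t)).card : ℝ))

/-- A valid multistage instance: the empty set is feasible at every time step and
profits are nonnegative. -/
def ValidInstance (n T : ℕ) (F : ℕ → Set (Finset (Fin n)))
    (p : ℕ → Finset (Fin n) → ℝ) : Prop :=
  (∀ t, t < T → (∅ : Finset (Fin n)) ∈ F t) ∧ ∀ t, t < T → ∀ S, 0 ≤ p t S

/-- A solution sequence: feasible at every time step. -/
def IsSol (n T : ℕ) (F : ℕ → Set (Finset (Fin n))) (S : ℕ → Finset (Fin n)) : Prop :=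
  ∀ t, t < T → S t ∈ F t

/-- A deterministic online algorithm: the solution output at time `t < T` depends
only on the data `(F_s, p_s)` revealed up to time `s ≤ t`. -/
def IsOnline (n T : ℕ)
    (alg : (ℕ → Set (Finset (Fin n))) → (ℕ → Finset (Fin n) → ℝ) → ℕ → Finset (Fin n)) :
    Prop :=
  ∀ F p F' p', ∀ t, t < T →
    (∀ s, s ≤ t → F s = F' s ∧ p s = p' s) → alg F p t = alg F' p' t



open Classical in
noncomputable def argmaxOn {n : ℕ} (F : Set (Finset (Fin n))) (f : Finset (Fin n) → ℝ) :
    Finset (Fin n) :=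
  if h : ∃ S ∈ F, ∀ S' ∈ F, f S' ≤ f S then h.choose else ∅

lemma argmaxOn_spec {n : ℕ} {F : Set (Finset (Fin n))} (hF : F.Nonempty)
    (f : Finset (Fin n) → ℝ) : argmaxOn F f ∈ F ∧ ∀ S' ∈ F, f S' ≤ f (argmaxOn F f) := by
  classical
  have hfin : F.Finite := Set.toFinite F
  have h : ∃ S ∈ F, ∀ S' ∈ F, f S' ≤ f S := by
    obtain ⟨S, hS, hmax⟩ := hfin.toFinset.exists_max_image f (hfin.toFinset_nonempty.mpr hF)
    exact ⟨S, hfin.mem_toFinset.mp hS, fun S' hS' => hmax S' (hfin.mem_toFinset.mpr hS')⟩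
  rw [argmaxOn, dif_pos h]
  exact ⟨h.choose_spec.1, h.choose_spec.2⟩

noncomputable def greedy (n : ℕ) (F : ℕ → Set (Finset (Fin n)))
    (p : ℕ → Finset (Fin n) → ℝ) : ℕ → Finset (Fin n)
  | 0 => argmaxOn (F 0) (p 0)
  | (t+1) => argmaxOn (F (t+1))
      (fun S => p (t+1) S +
        ((n : ℝ) - (((greedy n F p t \ S) ∪ (S \ greedy n F p t)).card : ℝ)))

lemma greedy_online (n : ℕ) (F F' : ℕ → Set (Finset (Fin n)))
    (p p' : ℕ → Finset (Fin n) → ℝ) (t : ℕ)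
    (h : ∀ s, s ≤ t → F s = F' s ∧ p s = p' s) :
    greedy n F p t = greedy n F' p' t := by
  induction t with
  | zero => simp [greedy, (h 0 le_rfl).1, (h 0 le_rfl).2]
  | succ t ih =>
    have he := ih (fun s hs => h s (hs.trans (Nat.le_succ t)))
    simp [greedy, he, (h (t+1) le_rfl).1, (h (t+1) le_rfl).2]

/-- In the SSFS model with Hamming bonus, there is a deterministic online algorithm
that is 2-competitive: on every SSFS instance its output sequence is feasible and
has value at least OPT / 2. -/
theorem stmt0 (n T : ℕ) (hT : 1 ≤ T) :
    ∃ alg : (ℕ → Set (Finset (Fin n))) → (ℕ → Finset (Fin n) → ℝ) → ℕ → Finset (Fin n),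
      IsOnline n T alg ∧
      ∀ (Feas : Set (Finset (Fin n))) (p : ℕ → Finset (Fin n) → ℝ),
        ValidInstance n T (fun _ => Feas) p →
        (∀ t, t < T → alg (fun _ => Feas) p t ∈ Feas) ∧
        ∀ S : ℕ → Finset (Fin n), IsSol n T (fun _ => Feas) S →
          hamVal n T p S / 2 ≤ hamVal n T p (alg (fun _ => Feas) p) := by
  obtain ⟨m, rfl⟩ : ∃ m, T = m + 1 := ⟨T - 1, by omega⟩
  refine ⟨greedy n, fun F p F' p' t _ h => greedy_online n F F' p p' t h, ?_⟩
  intro Feas p hvalid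
  have hne : Feas.Nonempty := ⟨∅, hvalid.1 0 (by omega)⟩
  have hp : ∀ t, t < m + 1 → ∀ X, 0 ≤ p t X := hvalid.2
  set A := greedy n (fun _ => Feas) p with hA
  have hA0 : A 0 = argmaxOn Feas (p 0) := rfl
  have hAs : ∀ t, A (t + 1) = argmaxOn Feas
      (fun X => p (t+1) X + ((n : ℝ) - (((A t \ X) ∪ (X \ A t)).card : ℝ))) := fun t => rfl
  have hmemA : ∀ t, A t ∈ Feas := by
    intro t
    cases t with
    | zero => rw [hA0]; exact (argmaxOn_spec hne _).1
    | succ t => rw [hAs t]; exact (argmaxOn_spec hne _).1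
  refine ⟨fun t _ => hmemA t, ?_⟩
  intro S hS
  have hd : ∀ X Y : Finset (Fin n), (((X \ Y) ∪ (Y \ X)).card : ℝ) ≤ n := by
    intro X Y
    exact_mod_cast (Finset.card_le_univ _).trans_eq (by simp)
  have hg0 : ∀ X ∈ Feas, p 0 X ≤ p 0 (A 0) := by
    rw [hA0]; exact (argmaxOn_spec hne _).2
  have hgmax : ∀ t, ∀ X ∈ Feas,
      p (t+1) X + ((n : ℝ) - (((A t \ X) ∪ (X \ A t)).card : ℝ)) ≤
      p (t+1) (A (t+1)) + ((n : ℝ) - (((A t \ A (t+1)) ∪ (A (t+1) \ A t)).card : ℝ)) := by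
    intro t X hX
    have h2 := (argmaxOn_spec hne
      (fun X => p (t+1) X + ((n : ℝ) - (((A t \ X) ∪ (X \ A t)).card : ℝ)))).2 X hX
    rw [← hAs t] at h2
    exact h2
  -- bonus-inclusive gain of greedy at step t+1 is at least n
  have hgn : ∀ t, t < m → (n : ℝ) ≤
      p (t+1) (A (t+1)) + ((n : ℝ) - (((A t \ A (t+1)) ∪ (A (t+1) \ A t)).card : ℝ)) := by
    intro t htm
    have := hgmax t (A t) (hmemA t)
    simp only [Finset.sdiff_self, Finset.union_empty, Finset.card_empty, Nat.cast_zero] at this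
    have hp0 : 0 ≤ p (t+1) (A t) := hp _ (by omega) _
    linarith
  have decomp : ∀ B : ℕ → Finset (Fin n),
      hamVal n (m+1) p B = p 0 (B 0) + ∑ t ∈ Finset.range m,
        (p (t+1) (B (t+1)) + ((n : ℝ) - (((B t \ B (t+1)) ∪ (B (t+1) \ B t)).card : ℝ))) := by
    intro B
    unfold hamVal
    simp only [Nat.add_sub_cancel]
    rw [Finset.sum_range_succ', Finset.sum_add_distrib]
    ring
  have hterm : ∀ t ∈ Finset.range m,
      p (t+1) (S (t+1)) + ((n : ℝ) - (((S t \ S (t+1)) ∪ (S (t+1) \ S t)).card : ℝ)) ≤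
      2 * (p (t+1) (A (t+1)) + ((n : ℝ) - (((A t \ A (t+1)) ∪ (A (t+1) \ A t)).card : ℝ))) := by
    intro t htm
    rw [Finset.mem_range] at htm
    have h1 := hgn t htm
    have h2 := hgmax t (S (t+1)) (hS (t+1) (by omega))
    have h3 := hd (A t) (S (t+1))
    have h4 : (0:ℝ) ≤ (((S t \ S (t+1)) ∪ (S (t+1) \ S t)).card : ℝ) := Nat.cast_nonneg _
    linarith
  have hsum := Finset.sum_le_sum hterm
  rw [← Finset.mul_sum] at hsum
  have h0 : p 0 (S 0) ≤ p 0 (A 0) := hg0 _ (hS 0 (by omega))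
  have h0' : 0 ≤ p 0 (A 0) := hp 0 (by omega) _
  rw [decomp S, decomp A, div_le_iff₀ (by norm_num : (0:ℝ) < 2)]
  linarith
end

section
/- In the GE model with Hamming bonus, restricted to instances satisfying subset feasibility and submodularity, the following 3-competitive guarantee holds: for every n divisible by 3 and every T, there exists a deterministic online algorithm whose output sequence on every such instance has value at least OPT/3. In particular, the algorithm that partitions N into three sets A, B, C of size n/3 and at each time t outputs the most profitable feasible solution among the profit-maximizing feasible solutions contained in A, in B, and in C achieves this guarantee. -/
/-- Subset feasibility: at every time step, every subset of a feasible solution is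
feasible. -/
def SubsetFeasible (n T : ℕ) (F : ℕ → Set (Finset (Fin n))) : Prop :=
  ∀ t, t < T → ∀ S ∈ F t, ∀ S' ⊆ S, S' ∈ F t

/-- Submodularity of the profit functions. -/
def Submodular (n T : ℕ) (p : ℕ → Finset (Fin n) → ℝ) : Prop :=
  ∀ t, t < T → ∀ S S' : Finset (Fin n),
    p t (S ∩ S') + p t (S ∪ S') ≤ p t S + p t S'

open Finset

section Parts

variable {α : Type*}

def InSomePart (A B C S : Finset α) : Prop :=
  S ⊆ A ∨ S ⊆ B ∨ S ⊆ C

def IsBestInParts (A B C : Finset α) (Ft : Set (Finset α)) (pt : Finset α → ℝ)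
    (S : Finset α) : Prop :=
  S ∈ Ft ∧ InSomePart A B C S ∧ ∀ S' ∈ Ft, InSomePart A B C S' → pt S' ≤ pt S

open Classical in
noncomputable def bestInParts (A B C : Finset α) (Ft : Set (Finset α))
    (pt : Finset α → ℝ) : Finset α :=
  if h : ∃ S, IsBestInParts A B C Ft pt S then h.choose else ∅

theorem isBestInParts_bestInParts [Fintype α] (A B C : Finset α) {Ft : Set (Finset α)}
    (pt : Finset α → ℝ) (h0 : ∅ ∈ Ft) :
    IsBestInParts A B C Ft pt (bestInParts A B C Ft pt) := by
  have hex : ∃ S, IsBestInParts A B C Ft pt S := by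
    obtain ⟨S, ⟨hS, hSpart⟩, hmax⟩ :=
      Set.exists_max_image {S | S ∈ Ft ∧ InSomePart A B C S} pt (Set.toFinite _)
        ⟨∅, h0, Or.inl (empty_subset A)⟩
    exact ⟨S, hS, hSpart, fun S' hS' hS'part => hmax S' ⟨hS', hS'part⟩⟩
  rw [bestInParts, dif_pos hex]
  exact hex.choose_spec

theorem exists_union_eq_univ_card_eq_div_three [Fintype α] [DecidableEq α]
    (h3 : 3 ∣ Fintype.card α) :
    ∃ A B C : Finset α, A ∪ B ∪ C = univ ∧ #A = Fintype.card α / 3 ∧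
      #B = Fintype.card α / 3 ∧ #C = Fintype.card α / 3 := by
  set k := Fintype.card α / 3
  have hk : 3 * k = Fintype.card α := Nat.mul_div_cancel' h3
  obtain ⟨A, -, hA⟩ := exists_subset_card_eq (s := (univ : Finset α)) (n := k)
    (by rw [card_univ]; omega)
  obtain ⟨B, hBA, hB⟩ := exists_subset_card_eq (s := univ \ A) (n := k)
    (by rw [card_univ_sdiff, hA]; omega)
  have hAB : #(A ∪ B) = 2 * k := by
    rw [card_union_of_disjoint (disjoint_sdiff.mono_right hBA), hA, hB]; ring
  refine ⟨A, B, univ \ (A ∪ B), union_sdiff_of_subset (subset_univ _), hA, hB, ?_⟩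
  rw [card_univ_sdiff, hAB]
  omega

end Parts

section Bounds

variable {α : Type*} [DecidableEq α]

theorem map_union_le_add_of_submodular {f : Finset α → ℝ}
    (hf : ∀ X Y, f (X ∩ Y) + f (X ∪ Y) ≤ f X + f Y) (hf0 : ∀ X, 0 ≤ f X)
    (X Y : Finset α) : f (X ∪ Y) ≤ f X + f Y := by
  linarith [hf X Y, hf0 (X ∩ Y)]

theorem map_le_three_mul_of_isBestInParts [Fintype α] {f : Finset α → ℝ}
    (hf : ∀ X Y, f (X ∩ Y) + f (X ∪ Y) ≤ f X + f Y) (hf0 : ∀ X, 0 ≤ f X)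
    {A B C : Finset α} (hU : A ∪ B ∪ C = univ) {Ft : Set (Finset α)}
    (hdown : ∀ S ∈ Ft, ∀ S' ⊆ S, S' ∈ Ft) {S X : Finset α}
    (hS : IsBestInParts A B C Ft f S) (hX : X ∈ Ft) :
    f X ≤ 3 * f S := by
  have htrace : ∀ P, InSomePart A B C (X ∩ P) → f (X ∩ P) ≤ f S := fun P hP =>
    hS.2.2 _ (hdown X hX _ inter_subset_left) hP
  have hA := htrace A (Or.inl inter_subset_right)
  have hB := htrace B (Or.inr (Or.inl inter_subset_right))
  have hC := htrace C (Or.inr (Or.inr inter_subset_right))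
  have hsplit : X = X ∩ A ∪ X ∩ B ∪ X ∩ C := by
    rw [← inter_union_distrib_left, ← inter_union_distrib_left, hU, inter_univ]
  have hAB := map_union_le_add_of_submodular hf hf0 (X ∩ A) (X ∩ B)
  have hABC := map_union_le_add_of_submodular hf hf0 (X ∩ A ∪ X ∩ B) (X ∩ C)
  rw [← hsplit] at hABC
  linarith

theorem card_sdiff_union_sdiff_le (S S' : Finset α) : #(S \ S' ∪ S' \ S) ≤ #S + #S' :=
  (card_union_le _ _).trans (add_le_add (card_le_card sdiff_subset) (card_le_card sdiff_subset))

theorem sub_card_le_three_mul_sub_card {n : ℕ} (X Y : Finset α) {S S' : Finset α}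
    (hS : 3 * #S ≤ n) (hS' : 3 * #S' ≤ n) :
    (n : ℝ) - #(X \ Y ∪ Y \ X) ≤ 3 * ((n : ℝ) - #(S \ S' ∪ S' \ S)) := by
  have hd : 3 * #(S \ S' ∪ S' \ S) ≤ 2 * n := by
    have := card_sdiff_union_sdiff_le S S'
    omega
  have hd' : (3 : ℝ) * #(S \ S' ∪ S' \ S) ≤ 2 * n := by exact_mod_cast hd
  have : (0 : ℝ) ≤ #(X \ Y ∪ Y \ X) := Nat.cast_nonneg _
  linarith

end Bounds

theorem hamVal_le_mul_of_forall {n T : ℕ} {p : ℕ → Finset (Fin n) → ℝ}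
    {S S' : ℕ → Finset (Fin n)} {c : ℝ}
    (hprofit : ∀ t < T, p t (S' t) ≤ c * p t (S t))
    (hbonus : ∀ t < T - 1, (n : ℝ) - #(S' t \ S' (t + 1) ∪ S' (t + 1) \ S' t) ≤
      c * ((n : ℝ) - #(S t \ S (t + 1) ∪ S (t + 1) \ S t))) :
    hamVal n T p S' ≤ c * hamVal n T p S := by
  rw [hamVal, hamVal, mul_add, mul_sum, mul_sum]
  gcongr with t ht t ht
  · exact hprofit t (mem_range.mp ht)
  · exact hbonus t (mem_range.mp ht)

theorem hamVal_div_three_le_of_isBestInParts {n T : ℕ} {F : ℕ → Set (Finset (Fin n))}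
    {p : ℕ → Finset (Fin n) → ℝ} (hv : ValidInstance n T F p) (hsf : SubsetFeasible n T F)
    (hsm : Submodular n T p) {A B C : Finset (Fin n)} (hU : A ∪ B ∪ C = univ)
    (hA : 3 * #A ≤ n) (hB : 3 * #B ≤ n) (hC : 3 * #C ≤ n) {S : ℕ → Finset (Fin n)}
    (hS : ∀ t < T, IsBestInParts A B C (F t) (p t) (S t)) {Shat : ℕ → Finset (Fin n)}
    (hShat : IsSol n T F Shat) :
    hamVal n T p Shat / 3 ≤ hamVal n T p S := by
  have hcard : ∀ t < T, 3 * #(S t) ≤ n := by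
    intro t ht
    rcases (hS t ht).2.1 with h | h | h
    · exact (Nat.mul_le_mul_left 3 (card_le_card h)).trans hA
    · exact (Nat.mul_le_mul_left 3 (card_le_card h)).trans hB
    · exact (Nat.mul_le_mul_left 3 (card_le_card h)).trans hC
  have hratio : hamVal n T p Shat ≤ 3 * hamVal n T p S := by
    refine hamVal_le_mul_of_forall (fun t ht => ?_) (fun t ht => ?_)
    · exact map_le_three_mul_of_isBestInParts (hsm t ht) (hv.2 t ht) hU (hsf t ht)
        (hS t ht) (hShat t ht)
    · exact sub_card_le_three_mul_sub_card _ _ (hcard t (by omega)) (hcard (t + 1) (by omega))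
  linarith

/-- In the GE model with Hamming bonus, restricted to instances with subset
feasibility and submodular profits, and for `n` divisible by 3: there is a
3-competitive deterministic online algorithm, and, in particular, any sequence
produced by the algorithm that partitions `N` into three parts `A`, `B`, `C` of size
`n/3` and at each step outputs the most profitable feasible solution among the
profit-maximizing feasible solutions contained in `A`, in `B`, and in `C`
has value at least `OPT / 3`. -/
theorem stmt6 (n T : ℕ) (hn : 3 ∣ n) :
    (∃ alg : (ℕ → Set (Finset (Fin n))) → (ℕ → Finset (Fin n) → ℝ) → ℕ → Finset (Fin n),
      IsOnline n T alg ∧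
      ∀ F p, ValidInstance n T F p → SubsetFeasible n T F → Submodular n T p →
        (∀ t, t < T → alg F p t ∈ F t) ∧
        ∀ S : ℕ → Finset (Fin n), IsSol n T F S →
          hamVal n T p S / 3 ≤ hamVal n T p (alg F p)) ∧
    ∀ F p, ValidInstance n T F p → SubsetFeasible n T F → Submodular n T p →
      ∀ A B C : Finset (Fin n),
        A ∪ B ∪ C = Finset.univ → Disjoint A B → Disjoint A C → Disjoint B C →
        A.card = n / 3 → B.card = n / 3 → C.card = n / 3 →
        ∀ S : ℕ → Finset (Fin n),
          (∀ t, t < T → S t ∈ F t ∧ (S t ⊆ A ∨ S t ⊆ B ∨ S t ⊆ C) ∧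
            ∀ S' ∈ F t, (S' ⊆ A ∨ S' ⊆ B ∨ S' ⊆ C) → p t S' ≤ p t (S t)) →
          ∀ Shat : ℕ → Finset (Fin n), IsSol n T F Shat →
            hamVal n T p Shat / 3 ≤ hamVal n T p S := by
  have hthird : ∀ P : Finset (Fin n), #P = n / 3 → 3 * #P ≤ n := fun P hP =>
    hP ▸ Nat.mul_div_le n 3
  refine ⟨?_, fun F p hv hsf hsm A B C hU _ _ _ hA hB hC S hS Shat hShat =>
    hamVal_div_three_le_of_isBestInParts hv hsf hsm hU (hthird A hA) (hthird B hB)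
      (hthird C hC) hS hShat⟩
  obtain ⟨A, B, C, hU, hA, hB, hC⟩ :=
    exists_union_eq_univ_card_eq_div_three (α := Fin n) (by rwa [Fintype.card_fin])
  simp only [Fintype.card_fin] at hA hB hC
  refine ⟨fun F p t => bestInParts A B C (F t) (p t), ?_, fun F p hv hsf hsm => ?_⟩
  · intro F p F' p' t _ hagree
    simp only [(hagree t le_rfl).1, (hagree t le_rfl).2]
  · have hbest t (ht : t < T) := isBestInParts_bestInParts A B C (p t) (hv.1 t ht)
    exact ⟨fun t ht => (hbest t ht).1, fun Shat hShat =>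
      hamVal_div_three_le_of_isBestInParts hv hsf hsm hU (hthird A hA) (hthird B hB)
        (hthird C hC) hbest hShat⟩
end

section
/- In the GE model with Hamming bonus, restricted to instances satisfying subset feasibility and submodularity, there exists a constant C > 0 such that for all n ≥ 1 and T ≥ 2 there is a deterministic online algorithm whose output sequence on every such instance with n objects and T time steps has value at least OPT/(21/8 + C/T + C/n). -/
/- ### Auxiliary material for the proof of `stmt7` -/

/-- Real-valued Hamming distance between two subsets. -/
noncomputable def hdist {n : ℕ} (X Y : Finset (Fin n)) : ℝ := (((X \ Y) ∪ (Y \ X)).card : ℝ)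

/-- The potential function used in the amortized analysis. -/
noncomputable def phiPot {n : ℕ} (X Y : Finset (Fin n)) : ℝ :=
  2/5 * ((X \ Y).card : ℝ) + 2/5 * ((Y \ X).card : ℝ) + 9/10 * ((X ∩ Y).card : ℝ)

lemma hdist_nonneg {n : ℕ} (X Y : Finset (Fin n)) : 0 ≤ hdist X Y := by
  unfold hdist; positivity

lemma hdist_le {n : ℕ} (X Y : Finset (Fin n)) : hdist X Y ≤ (n : ℝ) := by
  unfold hdist
  have h := (Nat.cast_le (α := ℝ)).mpr (Finset.card_le_univ ((X \ Y) ∪ (Y \ X)))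
  simpa using h

lemma hdist_empty {n : ℕ} (X : Finset (Fin n)) : hdist (∅ : Finset (Fin n)) X = (X.card : ℝ) := by
  simp [hdist]

lemma hdist_empty_empty {n : ℕ} : hdist (∅ : Finset (Fin n)) (∅ : Finset (Fin n)) = 0 := by
  simp [hdist]

lemma hdist_inter {n : ℕ} (X Y : Finset (Fin n)) :
    hdist X (X ∩ Y) = ((X \ Y).card : ℝ) := by
  unfold hdist
  congr 2
  ext x
  simp only [Finset.mem_union, Finset.mem_sdiff, Finset.mem_inter]
  tauto

lemma phi_nonneg {n : ℕ} (X Y : Finset (Fin n)) : 0 ≤ phiPot X Y := by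
  unfold phiPot; positivity

lemma card_le_n {n : ℕ} (X : Finset (Fin n)) : ((X.card : ℝ)) ≤ (n : ℝ) := by
  have h := (Nat.cast_le (α := ℝ)).mpr (Finset.card_le_univ X)
  simpa using h

lemma phi_le {n : ℕ} (X Y : Finset (Fin n)) : phiPot X Y ≤ 2 * (n : ℝ) := by
  have h1 := card_le_n (X \ Y)
  have h2 := card_le_n (Y \ X)
  have h3 := card_le_n (X ∩ Y)
  unfold phiPot
  linarith

/-- The elementwise certificate inequality behind the competitive analysis. -/
lemma keyCard {n : ℕ} (A A' O O' : Finset (Fin n)) :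
    0 ≤ -(1/2) * ((n:ℝ) - hdist A A') - (2/5) * ((n:ℝ) - hdist O O')
      + (3/5) * ((n:ℝ) - hdist A O') + (9/10) * ((n:ℝ) - ((A \ A').card : ℝ))
      + phiPot A O - phiPot A' O' := by
  have hc : ∀ (S : Finset (Fin n)), ((S.card : ℝ)) = ∑ x : Fin n, (if x ∈ S then (1:ℝ) else 0) := by
    intro S; simp [Finset.sum_boole]
  have hn : ((n : ℝ)) = ∑ _x : Fin n, (1:ℝ) := by simp
  unfold hdist phiPot
  rw [hc, hc, hc, hc, hc, hc, hc, hc, hc, hc, hn]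
  simp only [Finset.mul_sum, ← Finset.sum_sub_distrib, ← Finset.sum_add_distrib,
    ← Finset.sum_neg_distrib]
  apply Finset.sum_nonneg
  intro x _
  by_cases hA : x ∈ A <;> by_cases hA' : x ∈ A' <;> by_cases hO : x ∈ O <;> by_cases hO' : x ∈ O' <;>
    simp [hA, hA', hO, hO'] <;> norm_num

/-- Per-step competitive inequality. -/
lemma stepIneq {n : ℕ} (A A' O O' : Finset (Fin n)) (pA pO pI : ℝ)
    (hpI : 0 ≤ pI)
    (hC1 : pO + (3/2) * ((n:ℝ) - hdist A O') ≤ pA + (3/2) * ((n:ℝ) - hdist A A'))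
    (hC3 : pI + (3/2) * ((n:ℝ) - hdist A (A ∩ A')) ≤ pA + (3/2) * ((n:ℝ) - hdist A A')) :
    2/5 * (pO + ((n:ℝ) - hdist O O')) + (phiPot A' O' - phiPot A O)
      ≤ pA + ((n:ℝ) - hdist A A') := by
  have hd := hdist_inter A A'
  have hkey := keyCard A A' O O'
  rw [hd] at hC3
  linarith

/-- Per-step lower bound on the algorithm's amortized gain. -/
lemma sizeIneq {n : ℕ} (A A' : Finset (Fin n)) (pA pI : ℝ) (hpI : 0 ≤ pI)
    (hC3 : pI + (3/2) * ((n:ℝ) - hdist A (A ∩ A')) ≤ pA + (3/2) * ((n:ℝ) - hdist A A')) :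
    (n:ℝ)/2 ≤ pA + ((n:ℝ) - hdist A A') + (((A.card : ℝ)) - ((A'.card : ℝ))) := by
  have hd := hdist_inter A A'
  rw [hd] at hC3
  have h1 : hdist A A' = ((A \ A').card : ℝ) + ((A' \ A).card : ℝ) := by
    unfold hdist
    rw [Finset.card_union_of_disjoint disjoint_sdiff_sdiff]
    push_cast; ring
  have h2 : ((A ∩ A').card : ℝ) + ((A \ A').card : ℝ) = (A.card : ℝ) := by
    exact_mod_cast congrArg (Nat.cast (R := ℝ)) (Finset.card_inter_add_card_sdiff A A')
  have h2' : ((A' ∩ A).card : ℝ) + ((A' \ A).card : ℝ) = (A'.card : ℝ) := by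
    exact_mod_cast congrArg (Nat.cast (R := ℝ)) (Finset.card_inter_add_card_sdiff A' A)
  have h3 : ((A' ∩ A).card : ℝ) = ((A ∩ A').card : ℝ) := by rw [Finset.inter_comm]
  have h4 := card_le_n (A' \ A)
  linarith

open Classical in
/-- Pick a maximizer of `f` over `F` (or `∅` if none exists). -/
noncomputable def mxPick {n : ℕ} (F : Set (Finset (Fin n))) (f : Finset (Fin n) → ℝ) :
    Finset (Fin n) :=
  if h : ∃ S, S ∈ F ∧ ∀ S' ∈ F, f S' ≤ f S then h.choose else ∅

lemma mxPick_spec {n : ℕ} {F : Set (Finset (Fin n))} (hne : F.Nonempty)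
    (f : Finset (Fin n) → ℝ) :
    mxPick F f ∈ F ∧ ∀ S' ∈ F, f S' ≤ f (mxPick F f) := by
  have h : ∃ S, S ∈ F ∧ ∀ S' ∈ F, f S' ≤ f S := by
    have hfin : F.Finite := Set.toFinite F
    obtain ⟨b, hb, hmax⟩ := Finset.exists_max_image hfin.toFinset f (by simpa using hne)
    exact ⟨b, by simpa using hb, fun S' hS' => hmax S' (by simpa using hS')⟩
  classical
  rw [mxPick, dif_pos h]
  exact ⟨h.choose_spec.1, h.choose_spec.2⟩

/-- The online algorithm: greedily maximize current profit plus `3/2` times the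
transition bonus from the previously chosen set. -/
noncomputable def algA (n : ℕ) (F : ℕ → Set (Finset (Fin n)))
    (p : ℕ → Finset (Fin n) → ℝ) : ℕ → Finset (Fin n)
  | 0 => mxPick (F 0) (fun S => p 0 S + (3/2) * ((n:ℝ) - hdist ∅ S))
  | (t+1) => mxPick (F (t+1)) (fun S => p (t+1) S + (3/2) * ((n:ℝ) - hdist (algA n F p t) S))

lemma algA_online {n : ℕ} (F F' : ℕ → Set (Finset (Fin n)))
    (p p' : ℕ → Finset (Fin n) → ℝ) (t : ℕ)
    (h : ∀ s, s ≤ t → F s = F' s ∧ p s = p' s) :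
    algA n F p t = algA n F' p' t := by
  induction t with
  | zero => simp only [algA, (h 0 le_rfl).1, (h 0 le_rfl).2]
  | succ t ih =>
      have hprev : algA n F p t = algA n F' p' t :=
        ih (fun s hs => h s (hs.trans (Nat.le_succ t)))
      simp only [algA, (h (t+1) le_rfl).1, (h (t+1) le_rfl).2, hprev]

/-- In the GE model with Hamming bonus, restricted to instances with subset
feasibility and submodular profits, there is a constant `C > 0` such that for all
`n ≥ 1` and `T ≥ 2` there is a deterministic online algorithm whose output on every
such instance has value at least `OPT / (21/8 + C/T + C/n)`. -/
theorem stmt7 :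
    ∃ C : ℝ, 0 < C ∧
      ∀ n T : ℕ, 1 ≤ n → 2 ≤ T →
        ∃ alg : (ℕ → Set (Finset (Fin n))) → (ℕ → Finset (Fin n) → ℝ) → ℕ → Finset (Fin n),
          IsOnline n T alg ∧
          ∀ F p, ValidInstance n T F p → SubsetFeasible n T F → Submodular n T p →
            (∀ t, t < T → alg F p t ∈ F t) ∧
            ∀ S : ℕ → Finset (Fin n), IsSol n T F S →
              hamVal n T p S / (21/8 + C / (T : ℝ) + C / (n : ℝ)) ≤
                hamVal n T p (alg F p) := by
  refine ⟨28, by norm_num, ?_⟩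
  intro n T hn hT
  refine ⟨fun F p => algA n F p, ?_, ?_⟩
  · intro F p F' p' t _ h
    exact algA_online F F' p p' t h
  · intro F p hVI hSF _hSM
    have hne : ∀ t, t < T → (F t).Nonempty := fun t ht => ⟨∅, hVI.1 t ht⟩
    have hfeas : ∀ t, t < T → algA n F p t ∈ F t := by
      intro t ht
      cases t with
      | zero =>
          show mxPick (F 0) _ ∈ F 0
          exact (mxPick_spec (hne 0 ht) _).1
      | succ t =>
          show mxPick (F (t+1)) _ ∈ F (t+1)
          exact (mxPick_spec (hne (t+1) ht) _).1
    refine ⟨hfeas, ?_⟩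
    intro S hS
    obtain ⟨k, rfl⟩ : ∃ k, T = k + 1 := ⟨T - 1, by omega⟩
    have hk : 1 ≤ k := by omega
    set A : ℕ → Finset (Fin n) := algA n F p with hAdef
    -- maximality at step t+1
    have spec : ∀ t, t + 1 < k + 1 → ∀ S' ∈ F (t+1),
        p (t+1) S' + (3/2) * ((n:ℝ) - hdist (A t) S')
          ≤ p (t+1) (A (t+1)) + (3/2) * ((n:ℝ) - hdist (A t) (A (t+1))) := by
      intro t ht S' hS'
      have h := (mxPick_spec (hne (t+1) ht)
        (fun S => p (t+1) S + (3/2) * ((n:ℝ) - hdist (A t) S))).2 S' hS'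
      simpa [hAdef, algA] using h
    -- maximality at step 0
    have spec0 : ∀ S' ∈ F 0,
        p 0 S' + (3/2) * ((n:ℝ) - hdist ∅ S')
          ≤ p 0 (A 0) + (3/2) * ((n:ℝ) - hdist ∅ (A 0)) := by
      intro S' hS'
      have h := (mxPick_spec (hne 0 (by omega))
        (fun S => p 0 S + (3/2) * ((n:ℝ) - hdist (∅ : Finset (Fin n)) S))).2 S' hS'
      simpa [hAdef, algA] using h
    -- per-step inequalities
    have key1 : ∀ t ∈ Finset.range k,
        2/5 * (p (t+1) (S (t+1)) + ((n:ℝ) - hdist (S t) (S (t+1)))) +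
            (phiPot (A (t+1)) (S (t+1)) - phiPot (A t) (S t))
          ≤ p (t+1) (A (t+1)) + ((n:ℝ) - hdist (A t) (A (t+1))) := by
      intro t ht
      rw [Finset.mem_range] at ht
      have ht' : t + 1 < k + 1 := by omega
      have hC1 := spec t ht' (S (t+1)) (hS (t+1) ht')
      have hC3 := spec t ht' (A t ∩ A (t+1))
        (hSF (t+1) ht' (A (t+1)) (hfeas (t+1) ht') _ Finset.inter_subset_right)
      exact stepIneq (A t) (A (t+1)) (S t) (S (t+1)) _ _ _
        (hVI.2 (t+1) ht' _) hC1 hC3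
    have key2 : ∀ t ∈ Finset.range k,
        (n:ℝ)/2 ≤ (p (t+1) (A (t+1)) + ((n:ℝ) - hdist (A t) (A (t+1)))) +
          ((((A t).card : ℝ)) - (((A (t+1)).card : ℝ))) := by
      intro t ht
      rw [Finset.mem_range] at ht
      have ht' : t + 1 < k + 1 := by omega
      have hC3 := spec t ht' (A t ∩ A (t+1))
        (hSF (t+1) ht' (A (t+1)) (hfeas (t+1) ht') _ Finset.inter_subset_right)
      exact sizeIneq (A t) (A (t+1)) _ _ (hVI.2 (t+1) ht' _) hC3
    -- summed inequalities
    have sum1 := Finset.sum_le_sum key1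
    rw [Finset.sum_add_distrib, Finset.sum_range_sub (fun t => phiPot (A t) (S t)) k,
      ← Finset.mul_sum] at sum1
    have sum2 := Finset.sum_le_sum key2
    rw [Finset.sum_add_distrib, Finset.sum_range_sub' (fun t => ((A t).card : ℝ)) k,
      Finset.sum_const, Finset.card_range, nsmul_eq_mul] at sum2
    -- decomposition of hamVal
    have hdecomp : ∀ (W : ℕ → Finset (Fin n)),
        hamVal n (k+1) p W = p 0 (W 0) +
          ∑ t ∈ Finset.range k, (p (t+1) (W (t+1)) + ((n:ℝ) - hdist (W t) (W (t+1)))) := by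
      intro W
      unfold hamVal hdist
      rw [Nat.add_sub_cancel, Finset.sum_range_succ' (fun t => p t (W t)) k,
        Finset.sum_add_distrib]
      ring
    rw [hdecomp S, hdecomp A]
    set PS := ∑ t ∈ Finset.range k, (p (t+1) (S (t+1)) + ((n:ℝ) - hdist (S t) (S (t+1)))) with hPS
    set PA := ∑ t ∈ Finset.range k, (p (t+1) (A (t+1)) + ((n:ℝ) - hdist (A t) (A (t+1)))) with hPA
    -- step-0 consequences
    have h0S : p 0 (S 0) ≤ p 0 (A 0) + (3/2) * (n:ℝ) := by
      have h := spec0 (S 0) (hS 0 (by omega))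
      have h1 := hdist_le (∅ : Finset (Fin n)) (S 0)
      have h2 := hdist_nonneg (∅ : Finset (Fin n)) (A 0)
      linarith
    have h0E : ((A 0).card : ℝ) ≤ p 0 (A 0) := by
      have h := spec0 ∅ (hVI.1 0 (by omega))
      rw [hdist_empty_empty, hdist_empty] at h
      have h1 := hVI.2 0 (by omega) (∅ : Finset (Fin n))
      have h2 : (0:ℝ) ≤ ((A 0).card : ℝ) := by positivity
      linarith
    have hpA0 : 0 ≤ p 0 (A 0) := hVI.2 0 (by omega) _
    have hphi0 : phiPot (A 0) (S 0) ≤ 2 * (n:ℝ) := phi_le _ _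
    have hphik : 0 ≤ phiPot (A k) (S k) := phi_nonneg _ _
    have hcardk : (0:ℝ) ≤ ((A k).card : ℝ) := by positivity
    -- main bounds
    have hOPT : p 0 (S 0) + PS ≤ 5/2 * (p 0 (A 0) + PA) + 7 * (n:ℝ) := by linarith
    have hALG : (k:ℝ) * (n:ℝ) / 2 ≤ p 0 (A 0) + PA := by linarith
    -- final numeric argument
    have hkR : (1:ℝ) ≤ (k:ℝ) := by exact_mod_cast hk
    have hnR : (1:ℝ) ≤ (n:ℝ) := by exact_mod_cast hn
    have hTR : ((k+1 : ℕ) : ℝ) = (k:ℝ) + 1 := by push_cast; ring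
    have hTpos : (0:ℝ) < ((k+1 : ℕ) : ℝ) := by rw [hTR]; linarith
    have hden : (0:ℝ) < 21/8 + 28 / ((k+1 : ℕ) : ℝ) + 28 / (n:ℝ) := by
      have : (0:ℝ) < 28 / ((k+1 : ℕ) : ℝ) := by positivity
      have : (0:ℝ) < 28 / (n:ℝ) := by positivity
      positivity
    rw [div_le_iff₀ hden]
    have hALG0 : (0:ℝ) ≤ p 0 (A 0) + PA := by nlinarith
    have h7 : 7 * (n:ℝ) ≤ (p 0 (A 0) + PA) * (28 / ((k+1 : ℕ) : ℝ)) := by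
      rw [← mul_div_assoc, le_div_iff₀ hTpos, hTR]
      nlinarith
    have h8 : (0:ℝ) ≤ (p 0 (A 0) + PA) * (28 / (n:ℝ)) := by
      apply mul_nonneg hALG0
      positivity
    rw [mul_add, mul_add]
    nlinarith
end

section
/- In the GE model with intersection bonus, there is no c-competitive deterministic online algorithm for any constant c ≥ 1: for every c ≥ 1 and every deterministic online algorithm there exists a general-evolution intersection-bonus instance (with n = 2 objects, T = 2 time steps, and all profits zero) on which the algorithm's output sequence has value 0 while OPT ≥ 1, so that the algorithm's value is strictly less than OPT/c. -/
/-- The value of a solution sequence under the intersection bonus: total profit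
plus, for each pair of consecutive steps, the size of the intersection of the two
solutions. -/
noncomputable def intVal (n T : ℕ) (p : ℕ → Finset (Fin n) → ℝ)
    (S : ℕ → Finset (Fin n)) : ℝ :=
  (∑ t ∈ Finset.range T, p t (S t)) +
    ∑ t ∈ Finset.range (T - 1), ((S t ∩ S (t + 1)).card : ℝ)

/-- In the GE model with intersection bonus, there is no `c`-competitive
deterministic online algorithm for any constant `c ≥ 1`: every such algorithm
admits a general-evolution instance with `n = 2` objects, `T = 2` time steps and
all profits zero, on which its output has value `0` while some solution sequence
has value at least `1`; in particular its value is strictly below `OPT / c`. -/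
theorem stmt10 (c : ℝ) (hc : 1 ≤ c)
    (alg : (ℕ → Set (Finset (Fin 2))) → (ℕ → Finset (Fin 2) → ℝ) → ℕ → Finset (Fin 2))
    (honline : IsOnline 2 2 alg)
    (hfeas : ∀ F p, ValidInstance 2 2 F p → ∀ t, t < 2 → alg F p t ∈ F t) :
    ∃ F : ℕ → Set (Finset (Fin 2)),
      ValidInstance 2 2 F (fun _ _ => 0) ∧
      intVal 2 2 (fun _ _ => 0) (alg F (fun _ _ => 0)) = 0 ∧
      ∃ Shat : ℕ → Finset (Fin 2), IsSol 2 2 F Shat ∧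
        1 ≤ intVal 2 2 (fun _ _ => 0) Shat ∧
        intVal 2 2 (fun _ _ => 0) (alg F (fun _ _ => 0)) <
          intVal 2 2 (fun _ _ => 0) Shat / c := by
  classical
  set F0 : Set (Finset (Fin 2)) := {∅, {0}, {1}} with hF0
  set Fpre : ℕ → Set (Finset (Fin 2)) := fun t => if t = 0 then F0 else {∅} with hFpre
  have hvalidpre : ValidInstance 2 2 Fpre (fun _ _ => 0) := by
    refine ⟨fun t _ => ?_, fun t _ S => le_refl 0⟩
    by_cases h : t = 0 <;> simp [Fpre, F0, h]
  set A := alg Fpre (fun _ _ => 0) 0 with hA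
  have hAF0 : A ∈ F0 := by
    have := hfeas Fpre (fun _ _ => 0) hvalidpre 0 (by norm_num)
    simpa [Fpre] using this
  set x : Fin 2 := if (0 : Fin 2) ∈ A then 1 else 0 with hx
  have hxA : x ∉ A := by
    have h := hAF0
    simp only [hF0, Set.mem_insert_iff, Set.mem_singleton_iff] at h
    rcases h with h | h | h <;> rw [hx, h] <;> decide
  set F : ℕ → Set (Finset (Fin 2)) :=
    fun t => if t = 0 then F0 else {∅, {x}} with hF
  have hvalid : ValidInstance 2 2 F (fun _ _ => 0) := by
    refine ⟨fun t _ => ?_, fun t _ S => le_refl 0⟩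
    by_cases h : t = 0 <;> simp [F, F0, h]
  have halg0 : alg F (fun _ _ => 0) 0 = A := by
    apply honline F _ Fpre _ 0 (by norm_num)
    intro s hs
    interval_cases s
    exact ⟨by simp [F, Fpre], rfl⟩
  have halg1 : alg F (fun _ _ => 0) 1 ∈ ({∅, {x}} : Set (Finset (Fin 2))) := by
    have := hfeas F (fun _ _ => 0) hvalid 1 (by norm_num)
    simpa [F] using this
  have hinter : alg F (fun _ _ => 0) 0 ∩ alg F (fun _ _ => 0) 1 = ∅ := by
    rw [halg0]
    rcases halg1 with h | h <;> rw [h]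
    · exact Finset.inter_empty A
    · rw [Finset.inter_comm]
      exact Finset.singleton_inter_of_notMem hxA
  have hvalalg : intVal 2 2 (fun _ _ => 0) (alg F (fun _ _ => 0)) = 0 := by
    simp [intVal, hinter]
  refine ⟨F, hvalid, hvalalg, fun _ => {x}, ?_, ?_, ?_⟩
  · intro t ht
    by_cases h : t = 0
    · subst h
      rcases hx ▸ (ite_eq_or_eq ((0 : Fin 2) ∈ A) 1 0) with h' | h' <;>
        simp [F, F0, h']
    · simp [F, h]
  · simp [intVal]
  · rw [hvalalg]
    have h1 : intVal 2 2 (fun _ _ => 0) (fun _ => ({x} : Finset (Fin 2))) = 1 := by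
      simp [intVal]
    rw [h1]
    have hc0 : 0 < c := lt_of_lt_of_le one_pos hc
    positivity
end

section
/- (Two-step upper bound on the optimum.) Consider any multistage instance with intersection bonus and T ≥ 2 time steps, and for each t ∈ {1,…,T−1} let z*_t = max{ p_t(A) + p_{t+1}(B) + |A ∩ B| : A ∈ F_t, B ∈ F_{t+1} } be the optimal value of the two-step subproblem on time steps t and t+1. Then every solution sequence (Ŝ_1,…,Ŝ_T) satisfies f(Ŝ_1,…,Ŝ_T) ≤ Σ_{t=1}^{T−1} z*_t; in particular OPT ≤ Σ_{t=1}^{T−1} z*_t. -/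
theorem Finset.sum_range_succ_succ_le_sum_range_succ_add
    {M : Type*} [AddCommMonoid M] [PartialOrder M] [IsOrderedAddMonoid M]
    (a : ℕ → M) (k : ℕ) (ha : ∀ t < k + 1, 0 ≤ a (t + 1)) :
    ∑ t ∈ range (k + 2), a t ≤ ∑ t ∈ range (k + 1), (a t + a (t + 1)) := by
  have hlast : a (k + 1) ≤ ∑ t ∈ range (k + 1), a (t + 1) :=
    single_le_sum (f := fun t => a (t + 1)) (fun t ht => ha t (mem_range.mp ht))
      (self_mem_range_succ k)
  rw [sum_range_succ, sum_add_distrib]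
  exact add_le_add_right hlast _

theorem intVal_le_sum_twoStep (n k : ℕ) (p : ℕ → Finset (Fin n) → ℝ)
    (hp : ∀ t < k + 2, ∀ S, 0 ≤ p t S) (S : ℕ → Finset (Fin n)) :
    intVal n (k + 2) p S ≤ ∑ t ∈ Finset.range (k + 1),
      (p t (S t) + p (t + 1) (S (t + 1)) + ((S t ∩ S (t + 1)).card : ℝ)) := by
  have hprofit := Finset.sum_range_succ_succ_le_sum_range_succ_add (fun t => p t (S t)) k
    fun t ht => hp (t + 1) (by omega) _
  rw [intVal, Finset.sum_add_distrib]
  exact add_le_add_left hprofit _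

theorem stmt13_general (n T : ℕ) (hT : 2 ≤ T)
    (F : ℕ → Set (Finset (Fin n))) (p : ℕ → Finset (Fin n) → ℝ)
    (hvalid : ValidInstance n T F p)
    (z : ℕ → ℝ)
    (hub : ∀ t, t + 1 < T → ∀ A ∈ F t, ∀ B ∈ F (t + 1),
      p t A + p (t + 1) B + ((A ∩ B).card : ℝ) ≤ z t) :
    ∀ Shat : ℕ → Finset (Fin n), IsSol n T F Shat →
      intVal n T p Shat ≤ ∑ t ∈ Finset.range (T - 1), z t := by
  intro Shat hsol
  obtain ⟨k, rfl⟩ := Nat.exists_eq_add_of_le' hT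
  refine (intVal_le_sum_twoStep n k p hvalid.2 Shat).trans (Finset.sum_le_sum fun t ht => ?_)
  have ht : t + 1 < k + 2 := by simp only [Finset.mem_range] at ht; omega
  exact hub t ht _ (hsol t (by omega)) _ (hsol (t + 1) ht)

/-- Two-step upper bound on the optimum: if for each `t` with `t + 1 < T` the value
`z t` is the maximum of `p t A + p (t+1) B + |A ∩ B|` over `A ∈ F t`, `B ∈ F (t+1)`,
then every solution sequence has intersection-bonus value at most
`∑_{t=0}^{T-2} z t`; in particular `OPT ≤ ∑_{t=0}^{T-2} z t`. -/
theorem stmt13 (n T : ℕ) (hT : 2 ≤ T)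
    (F : ℕ → Set (Finset (Fin n))) (p : ℕ → Finset (Fin n) → ℝ)
    (hvalid : ValidInstance n T F p)
    (z : ℕ → ℝ)
    (hub : ∀ t, t + 1 < T → ∀ A ∈ F t, ∀ B ∈ F (t + 1),
      p t A + p (t + 1) B + ((A ∩ B).card : ℝ) ≤ z t)
    (hattained : ∀ t, t + 1 < T → ∃ A ∈ F t, ∃ B ∈ F (t + 1),
      z t = p t A + p (t + 1) B + ((A ∩ B).card : ℝ)) :
    ∀ Shat : ℕ → Finset (Fin n), IsSol n T F Shat →
      intVal n T p Shat ≤ ∑ t ∈ Finset.range (T - 1), z t :=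
  stmt13_general n T hT F p hvalid z hub
end

section
/- (Guarantee of the modified-profit greedy sequence, part 1.) Consider an SSFS instance with intersection bonus, finite feasible family F (with ∅ ∈ F), nonnegative profits, and T ≥ 2 time steps. Let (S_1,…,S_T) be any sequence with: S_1 maximizing p_1(S) + |S| over S ∈ F; for 2 ≤ t ≤ T−1, S_t maximizing p_t(S) + |S ∩ S_{t−1}| + |S| over S ∈ F; and S_T maximizing p_T(S) + |S ∩ S_{T−1}| over S ∈ F. Then f(S_1,…,S_T) + Σ_{t=1}^{T−1} |S_t| ≥ OPT. -/
/-- The sequences produced by the modified-profit greedy algorithm `MP-Algo`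
(time steps are indexed `0, …, T-1`): `S 0` maximizes `p 0 S' + |S'|`; for
`1 ≤ t ≤ T-2`, `S t` maximizes `p t S' + |S' ∩ S (t-1)| + |S'|`; and `S (T-1)`
maximizes `p (T-1) S' + |S' ∩ S (T-2)|`, each over feasible `S'`. -/
def MPGreedy (n T : ℕ) (Feas : Set (Finset (Fin n))) (p : ℕ → Finset (Fin n) → ℝ)
    (S : ℕ → Finset (Fin n)) : Prop :=
  (S 0 ∈ Feas ∧ ∀ S' ∈ Feas,
      p 0 S' + (S'.card : ℝ) ≤ p 0 (S 0) + ((S 0).card : ℝ)) ∧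
  (∀ t, 1 ≤ t → t < T - 1 → S t ∈ Feas ∧ ∀ S' ∈ Feas,
      p t S' + ((S' ∩ S (t - 1)).card : ℝ) + (S'.card : ℝ) ≤
        p t (S t) + ((S t ∩ S (t - 1)).card : ℝ) + ((S t).card : ℝ)) ∧
  (S (T - 1) ∈ Feas ∧ ∀ S' ∈ Feas,
      p (T - 1) S' + ((S' ∩ S (T - 2)).card : ℝ) ≤
        p (T - 1) (S (T - 1)) + ((S (T - 1) ∩ S (T - 2)).card : ℝ))

/-!
Each greedy choice `S t` maximizes the modified profit `p t X + |X ∩ S (t-1)| + |X|` over the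
static family (without the intersection term at `t = 0` and without `|X|` at `t = T-1`), so the
same holds for the sum over `t`. Evaluated at any feasible sequence `Ŝ` this sum dominates
`f(Ŝ)`, since `|Ŝ t ∩ Ŝ (t+1)| ≤ |Ŝ t|` and the cross terms `|Ŝ (t+1) ∩ S t|` are nonnegative;
evaluated at `S` it is exactly `f(S) + ∑_{t ≤ T-2} |S t|`.
-/

open Finset

section ModifiedProfit

variable {α : Type*} [DecidableEq α]

noncomputable def modProfit (T : ℕ) (p : ℕ → Finset α → ℝ) (S : ℕ → Finset α) (t : ℕ)
    (X : Finset α) : ℝ :=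
  p t X + (if t = 0 then 0 else (#(X ∩ S (t - 1)) : ℝ)) + (if t = T - 1 then 0 else (#X : ℝ))

theorem sum_range_succ_ite_eq_zero {M : Type*} [AddCommMonoid M] (m : ℕ) (f : ℕ → M) :
    ∑ t ∈ range (m + 1), (if t = 0 then 0 else f t) = ∑ t ∈ range m, f (t + 1) := by
  simp [sum_range_succ']

theorem sum_range_succ_ite_eq_last {M : Type*} [AddCommMonoid M] (m : ℕ) (f : ℕ → M) :
    ∑ t ∈ range (m + 1), (if t = m then 0 else f t) = ∑ t ∈ range m, f t := by
  rw [sum_range_succ, if_pos rfl, add_zero]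
  exact sum_congr rfl fun t ht => if_neg (mem_range.mp ht).ne

theorem sum_modProfit (T : ℕ) (p : ℕ → Finset α → ℝ) (S X : ℕ → Finset α) :
    ∑ t ∈ range T, modProfit T p S t (X t) =
      ∑ t ∈ range T, p t (X t) + ∑ t ∈ range (T - 1), (#(X (t + 1) ∩ S t) : ℝ) +
        ∑ t ∈ range (T - 1), (#(X t) : ℝ) := by
  rcases T with _ | m
  · simp
  · simp only [modProfit, sum_add_distrib, Nat.add_sub_cancel]
    rw [sum_range_succ_ite_eq_zero, sum_range_succ_ite_eq_last]
    simp

end ModifiedProfit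

theorem MPGreedy.modProfit_le {n T : ℕ} (hT : 2 ≤ T) {Feas : Set (Finset (Fin n))}
    {p : ℕ → Finset (Fin n) → ℝ} {S : ℕ → Finset (Fin n)} (hS : MPGreedy n T Feas p S)
    {t : ℕ} (ht : t < T) {X : Finset (Fin n)} (hX : X ∈ Feas) :
    modProfit T p S t X ≤ modProfit T p S t (S t) := by
  obtain ⟨⟨-, hfirst⟩, hmiddle, -, hlast⟩ := hS
  unfold modProfit
  rcases Nat.eq_zero_or_pos t with rfl | ht0
  · simpa [show 0 ≠ T - 1 by omega] using hfirst X hX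
  rcases (show t ≤ T - 1 by omega).eq_or_lt with rfl | htT
  · simpa [ht0.ne', show T - 1 - 1 = T - 2 by omega] using hlast X hX
  · simpa [ht0.ne', htT.ne, add_assoc] using (hmiddle t ht0 htT).2 X hX

theorem intVal_le_sum_modProfit {n : ℕ} (T : ℕ) (p : ℕ → Finset (Fin n) → ℝ)
    (S X : ℕ → Finset (Fin n)) :
    intVal n T p X ≤ ∑ t ∈ range T, modProfit T p S t (X t) := by
  have hbonus : ∑ t ∈ range (T - 1), (#(X t ∩ X (t + 1)) : ℝ) ≤
      ∑ t ∈ range (T - 1), (#(X t) : ℝ) :=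
    sum_le_sum fun t _ => by exact_mod_cast card_le_card inter_subset_left
  have hcross : 0 ≤ ∑ t ∈ range (T - 1), (#(X (t + 1) ∩ S t) : ℝ) :=
    sum_nonneg fun t _ => Nat.cast_nonneg _
  rw [sum_modProfit, intVal]
  linarith

theorem sum_modProfit_self {n : ℕ} (T : ℕ) (p : ℕ → Finset (Fin n) → ℝ)
    (S : ℕ → Finset (Fin n)) :
    ∑ t ∈ range T, modProfit T p S t (S t) =
      intVal n T p S + ∑ t ∈ range (T - 1), (#(S t) : ℝ) := by
  simp only [sum_modProfit, intVal, fun t => inter_comm (S (t + 1)) (S t)]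

theorem stmt14_general (n T : ℕ) (hT : 2 ≤ T)
    (Feas : Set (Finset (Fin n)))
    (p : ℕ → Finset (Fin n) → ℝ)
    (S : ℕ → Finset (Fin n)) (hS : MPGreedy n T Feas p S) :
    ∀ Shat : ℕ → Finset (Fin n), IsSol n T (fun _ => Feas) Shat →
      intVal n T p Shat ≤
        intVal n T p S + ∑ t ∈ Finset.range (T - 1), ((S t).card : ℝ) := by
  intro Shat hShat
  calc intVal n T p Shat ≤ ∑ t ∈ range T, modProfit T p S t (Shat t) :=
        intVal_le_sum_modProfit T p S Shat
    _ ≤ ∑ t ∈ range T, modProfit T p S t (S t) :=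
        sum_le_sum fun t ht => hS.modProfit_le hT (mem_range.mp ht) (hShat t (mem_range.mp ht))
    _ = intVal n T p S + ∑ t ∈ range (T - 1), (#(S t) : ℝ) := sum_modProfit_self T p S

/-- Guarantee of the modified-profit greedy sequence, part 1: for an SSFS instance
with intersection bonus (empty set feasible, nonnegative profits, `T ≥ 2` time
steps), any sequence `S` satisfying the `MP-Algo` maximization conditions satisfies
`f(S) + ∑_{t=0}^{T-2} |S t| ≥ OPT`. -/
theorem stmt14 (n T : ℕ) (hT : 2 ≤ T)
    (Feas : Set (Finset (Fin n))) (hempty : (∅ : Finset (Fin n)) ∈ Feas)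
    (p : ℕ → Finset (Fin n) → ℝ) (hp : ∀ t, t < T → ∀ S, 0 ≤ p t S)
    (S : ℕ → Finset (Fin n)) (hS : MPGreedy n T Feas p S) :
    ∀ Shat : ℕ → Finset (Fin n), IsSol n T (fun _ => Feas) Shat →
      intVal n T p Shat ≤
        intVal n T p S + ∑ t ∈ Finset.range (T - 1), ((S t).card : ℝ) :=
  stmt14_general n T hT Feas p S hS
end

section
/- For every real c with 3 < c < 4, there is no sequence (b_t)_{t ∈ ℕ} of real numbers satisfying b_t > 1 for all t and b_{t+1} = c·(1 − 1/b_t) for all t. Equivalently, for every real sequence with b_{t+1} = c·(1 − 1/b_t) (whenever defined) there exists an index t with b_t ≤ 1. -/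
/-! Since `x ^ 2 - c * x + c > 0` for `0 < c < 4`, the map `x ↦ c * (1 - 1 / x)` sends every
`x > 0` strictly below `x`. A sequence staying above `1` would therefore decrease and converge
to some `L ≥ 1`, which by continuity would be a fixed point of the map — but there is none. -/

open Filter Topology Set

theorem Real.not_exists_orbit_Ici_of_lt_self {f : ℝ → ℝ} {a : ℝ} (hf : ContinuousOn f (Ici a))
    (hlt : ∀ x ∈ Ici a, f x < x) :
    ¬ ∃ b : ℕ → ℝ, (∀ t, b t ∈ Ici a) ∧ ∀ t, b (t + 1) = f (b t) := by
  rintro ⟨b, hba, hrec⟩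
  have hanti : Antitone b :=
    antitone_nat_of_succ_le fun t => (hrec t).symm ▸ (hlt _ (hba t)).le
  have hbdd : BddBelow (range b) := ⟨a, forall_mem_range.2 hba⟩
  set L := ⨅ t, b t
  have hL : Tendsto b atTop (𝓝 L) := tendsto_atTop_ciInf hanti hbdd
  have hLa : L ∈ Ici a := mem_Ici.2 (le_ciInf hba)
  have hfb : Tendsto (fun t => f (b t)) atTop (𝓝 (f L)) :=
    (hf L hLa).tendsto.comp (tendsto_nhdsWithin_iff.2 ⟨hL, Eventually.of_forall hba⟩)
  have hshift : Tendsto (fun t => f (b t)) atTop (𝓝 L) := by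
    simpa only [Function.comp_def, hrec] using hL.comp (tendsto_add_atTop_nat 1)
  exact (hlt L hLa).ne (tendsto_nhds_unique hfb hshift)

theorem mul_one_sub_one_div_lt_self {c x : ℝ} (hc0 : 0 < c) (hc4 : c < 4) (hx : 0 < x) :
    c * (1 - 1 / x) < x := by
  have hquad : 0 < x ^ 2 - c * x + c := by nlinarith [sq_nonneg (x - c / 2)]
  have hgap : x - c * (1 - 1 / x) = (x ^ 2 - c * x + c) / x := by
    field_simp
    ring
  rw [← sub_pos, hgap]
  positivity

/-- For every real `c` with `3 < c < 4`, there is no sequence `(b t)` of real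
numbers with `b t > 1` for all `t` and `b (t+1) = c * (1 - 1 / b t)` for all `t`. -/
theorem stmt16 (c : ℝ) (hc3 : 3 < c) (hc4 : c < 4) :
    ¬ ∃ b : ℕ → ℝ, (∀ t, 1 < b t) ∧ ∀ t, b (t + 1) = c * (1 - 1 / b t) := by
  rintro ⟨b, hb1, hrec⟩
  have hcont : ContinuousOn (fun x : ℝ => c * (1 - 1 / x)) (Ici 1) :=
    continuousOn_const.mul <| continuousOn_const.sub <|
      continuousOn_const.div continuousOn_id fun x hx => (zero_lt_one.trans_le hx).ne'
  exact Real.not_exists_orbit_Ici_of_lt_self hcont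
    (fun x hx => mul_one_sub_one_div_lt_self (by linarith) hc4 (zero_lt_one.trans_le hx))
    ⟨b, fun t => (hb1 t).le, hrec⟩
end
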